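/- arXiv:1705.03522 — 2 statements merged into one kernel-verified Lean document; each statement's English description precedes it below -/
import Mathlib

section
/- Let W be a finite-dimensional vector space over ℂ, V ⊆ W a subspace, N : V → W a linear map, and I : V → W the natural inclusion. For λ = (λ₁, λ₂) ∈ ℂ² set N^λ := λ₁I + λ₂N, and let E := {λ ∈ ℂ² : rank N^λ < max_μ rank N^μ} be the exceptional set of the pencil. Then the subspace V_J := ⋂_{λ ∈ ℂ² \ E} range(N^λ) lies in V and is invariant under N, i.e. V_J ⊆ V and N(V_J) ⊆ V_J. -/
open Module

variable {W : Type*} [AddCommGroup W] [Module ℂ W] [FiniteDimensional ℂ W]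

/-- The pencil `N^λ := λ₁ I + λ₂ N` generated by the inclusion `I : V → W` and a
partial operator `N : V → W`. -/
noncomputable def pencilOp (V : Submodule ℂ W) (N : V →ₗ[ℂ] W) (l : ℂ × ℂ) :
    V →ₗ[ℂ] W :=
  l.1 • V.subtype + l.2 • N

/-- The exceptional set of the pencil: those `λ ∈ ℂ²` where the rank of `N^λ`
drops below the maximal rank. -/
noncomputable def excSet (V : Submodule ℂ W) (N : V →ₗ[ℂ] W) : Set (ℂ × ℂ) :=
  {l | ∃ μ : ℂ × ℂ, finrank ℂ (LinearMap.range (pencilOp V N l))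
    < finrank ℂ (LinearMap.range (pencilOp V N μ))}

/-- The subspace `V_J := ⋂_{λ ∉ E} range(N^λ)`. -/
noncomputable def jordanSubspace (V : Submodule ℂ W) (N : V →ₗ[ℂ] W) :
    Submodule ℂ W :=
  ⨅ l ∈ (excSet V N)ᶜ, LinearMap.range (pencilOp V N l)

namespace JordanAux

variable (V : Submodule ℂ W) (N : V →ₗ[ℂ] W)

lemma pencil_apply (l : ℂ × ℂ) (v : V) :
    pencilOp V N l v = l.1 • (v : W) + l.2 • N v := by
  simp [pencilOp]

lemma pencil_one_zero : pencilOp V N (1, 0) = V.subtype := by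
  ext v; simp [pencilOp]

lemma rank_le (μ : ℂ × ℂ) :
    finrank ℂ (LinearMap.range (pencilOp V N μ)) ≤ finrank ℂ V :=
  LinearMap.finrank_range_le _

lemma one_zero_notMem : ((1 : ℂ), (0 : ℂ)) ∉ excSet V N := by
  rintro ⟨μ, hμ⟩
  rw [pencil_one_zero, Submodule.range_subtype] at hμ
  exact absurd hμ (not_lt.mpr (rank_le V N μ))

lemma exc_line (c : ℂ) (hc : (c, (1 : ℂ)) ∈ excSet V N) :
    ∃ v : V, v ≠ 0 ∧ (N v : W) = (-c) • (v : W) := by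
  obtain ⟨μ, hμ⟩ := hc
  have h1 : finrank ℂ (LinearMap.range (pencilOp V N (c, 1))) < finrank ℂ V :=
    lt_of_lt_of_le hμ (rank_le V N μ)
  have h2 := LinearMap.finrank_range_add_finrank_ker (pencilOp V N (c, 1))
  have h3 : LinearMap.ker (pencilOp V N (c, 1)) ≠ ⊥ := by
    intro h
    rw [h, finrank_bot] at h2
    omega
  obtain ⟨v, hv, hv0⟩ := (Submodule.ne_bot_iff _).mp h3
  refine ⟨v, hv0, ?_⟩
  rw [LinearMap.mem_ker, pencil_apply] at hv
  simp only [one_smul] at hv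
  have : (N v : W) = -(c • (v : W)) := by
    rw [← add_eq_zero_iff_eq_neg] at *
    linear_combination (norm := abel) hv
  rw [this, neg_smul]

/-- Decreasing chain whose intersection is the largest `N`-invariant
subspace contained in `V`. -/
noncomputable def Dchain : ℕ → Submodule ℂ W
  | 0 => V
  | (k + 1) => Submodule.map V.subtype (Submodule.comap N (Dchain k))

noncomputable def Vinf : Submodule ℂ W := ⨅ k, Dchain V N k

lemma Vinf_le_V : Vinf V N ≤ V := iInf_le _ 0

lemma Vinf_mapsTo (x : W) (hx : x ∈ Vinf V N) :
    (N ⟨x, Vinf_le_V V N hx⟩ : W) ∈ Vinf V N := by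
  rw [Vinf, Submodule.mem_iInf]
  intro k
  have h := (Submodule.mem_iInf (Dchain V N)).mp hx (k + 1)
  rw [Dchain] at h
  obtain ⟨v, hv, hvx⟩ := Submodule.mem_map.mp h
  rw [Submodule.mem_comap] at hv
  have hveq : (⟨x, Vinf_le_V V N hx⟩ : V) = v := Subtype.ext hvx.symm
  rw [hveq]
  exact hv

lemma eigvec_mem (v : V) (c : ℂ) (h : (N v : W) = c • (v : W)) :
    (v : W) ∈ Vinf V N := by
  rw [Vinf, Submodule.mem_iInf]
  intro k
  induction k with
  | zero => exact v.2
  | succ k ih =>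
    rw [Dchain]
    exact Submodule.mem_map.mpr ⟨v, by
      rw [Submodule.mem_comap, h]; exact Submodule.smul_mem _ _ ih, rfl⟩

noncomputable def endo : Module.End ℂ (Vinf V N) :=
  LinearMap.codRestrict (Vinf V N) (N.comp (Submodule.inclusion (Vinf_le_V V N)))
    (fun x => Vinf_mapsTo V N (x : W) x.2)

lemma finite_exc_line : {c : ℂ | (c, (1 : ℂ)) ∈ excSet V N}.Finite := by
  have hfin : (Neg.neg ⁻¹' {μ : ℂ | (endo V N).HasEigenvalue μ}).Finite :=
    Set.Finite.preimage (neg_injective.injOn) ((endo V N).finite_hasEigenvalue)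
  apply hfin.subset
  intro c hc
  obtain ⟨v, hv0, hveq⟩ := exc_line V N c hc
  have hmem : (v : W) ∈ Vinf V N := eigvec_mem V N v (-c) hveq
  refine Module.End.hasEigenvalue_of_hasEigenvector
    (x := ⟨(v : W), hmem⟩) ⟨?_, ?_⟩
  · rw [Module.End.mem_eigenspace_iff]
    apply Subtype.ext
    show (N _ : W) = (-c) • (v : W)
    have heq : (Submodule.inclusion (Vinf_le_V V N) ⟨(v : W), hmem⟩ : V) = v :=
      Subtype.ext rfl
    rw [heq]
    exact hveq
  · intro h
    apply hv0
    have h2 := congrArg Subtype.val h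
    exact Subtype.ext (by simpa using h2)

lemma mem_range_of_mem_jordan {w : W} (hw : w ∈ jordanSubspace V N)
    {l : ℂ × ℂ} (hl : l ∉ excSet V N) :
    w ∈ LinearMap.range (pencilOp V N l) :=
  (Submodule.mem_iInf _).mp ((Submodule.mem_iInf _).mp hw l) hl

lemma key (w : W) (hw : w ∈ jordanSubspace V N) (hwV : w ∈ V) :
    (N ⟨w, hwV⟩ : W) ∈ V := by
  classical
  set G : Set ℂ := {c | (c, (1 : ℂ)) ∉ excSet V N} with hG
  have hGinf : G.Infinite := Set.Finite.infinite_compl (finite_exc_line V N)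
  have hrange : ∀ c : G, w ∈ LinearMap.range (pencilOp V N ((c : ℂ), 1)) :=
    fun c => mem_range_of_mem_jordan V N hw c.2
  set u : G → V := fun c => (hrange c).choose with hu
  have huspec : ∀ c : G, (c : ℂ) • (u c : W) + N (u c) = w := by
    intro c
    have h := (hrange c).choose_spec
    rw [pencil_apply] at h
    simpa using h
  have hNu : ∀ c : G, (N (u c) : W) = w - (c : ℂ) • (u c : W) := by
    intro c
    rw [← huspec c]; abel
  obtain ⟨t, hts, hspan, hli⟩ :=
    exists_linearIndependent ℂ (Set.range fun c : G => ((u c : W)))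
  have htfin : t.Finite := hli.setFinite
  haveI := htfin.fintype
  have hchoose : ∀ x : t, ∃ c : G, (u c : W) = x := fun x => hts x.2
  choose σ hσ using hchoose
  obtain ⟨c₀, hc₀G, hc₀ne⟩ :
      ∃ c₀, c₀ ∈ G ∧ c₀ ∉ Set.range (fun x : t => ((σ x : ℂ))) := by
    have hinf : (G \ Set.range fun x : t => ((σ x : ℂ))).Infinite :=
      hGinf.diff (Set.finite_range _)
    obtain ⟨c₀, h⟩ := hinf.nonempty
    exact ⟨c₀, h.1, h.2⟩
  set c₀' : G := ⟨c₀, hc₀G⟩ with hc₀'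
  have hmem : (u c₀' : W) ∈ Submodule.span ℂ (Set.range ((↑) : t → W)) := by
    rw [Subtype.range_coe, hspan]
    exact Submodule.subset_span ⟨c₀', rfl⟩
  rw [Submodule.mem_span_range_iff_exists_fun] at hmem
  obtain ⟨a, ha⟩ := hmem
  set s : ℂ := ∑ x : t, a x with hs_def
  have hlift : u c₀' = ∑ x : t, a x • u (σ x) := by
    apply Subtype.ext
    show (u c₀' : W) = ((∑ x : t, a x • u (σ x) : V) : W)
    rw [Submodule.coe_sum]
    simp only [SetLike.val_smul, hσ]
    exact ha.symm
  have hkey : (1 - s) • w = ∑ x : t, (a x * (c₀ - (σ x : ℂ))) • (x : W) := by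
    have h4 : (N (u c₀') : W) = ∑ x : t, a x • (N (u (σ x)) : W) := by
      rw [hlift, map_sum]
      simp [map_smul]
    rw [hNu c₀'] at h4
    simp only [hNu, hσ] at h4
    rw [← ha] at h4
    have expand : ∑ x : t, a x • (w - (σ x : ℂ) • (x : W))
        = s • w - ∑ x : t, (a x * (σ x : ℂ)) • (x : W) := by
      simp only [smul_sub, smul_smul]
      rw [Finset.sum_sub_distrib, ← Finset.sum_smul]
    rw [expand] at h4
    have expand2 : ∑ x : t, (a x * (c₀ - (σ x : ℂ))) • (x : W)
        = c₀ • (∑ x : t, a x • (x : W)) - ∑ x : t, (a x * (σ x : ℂ)) • (x : W) := by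
      rw [Finset.smul_sum, ← Finset.sum_sub_distrib]
      apply Finset.sum_congr rfl
      intro x _
      rw [smul_smul, mul_comm c₀ (a x), mul_sub, sub_smul]
    rw [expand2]
    have h5 : c₀ • (∑ x : t, a x • (x : W))
        = w - (s • w - ∑ x : t, (a x * (σ x : ℂ)) • (x : W)) := by
      rw [← h4]; abel
    rw [h5, sub_smul, one_smul]
    abel
  by_cases hs : s = 1
  · exfalso
    have hzero : ∑ x : t, (a x * (c₀ - (σ x : ℂ))) • (x : W) = 0 := by
      rw [← hkey, hs, sub_self, zero_smul]
    have hcoeff := Fintype.linearIndependent_iff.mp hli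
      (fun x => a x * (c₀ - (σ x : ℂ))) hzero
    have ha0 : ∀ x : t, a x = 0 := by
      intro x
      rcases mul_eq_zero.mp (hcoeff x) with h | h
      · exact h
      · exact absurd ⟨x, (sub_eq_zero.mp h).symm⟩ hc₀ne
    have : s = 0 := Finset.sum_eq_zero (fun x _ => ha0 x)
    rw [hs] at this
    exact one_ne_zero this
  · have h1s : (1 : ℂ) - s ≠ 0 := sub_ne_zero_of_ne (Ne.symm hs)
    set v₁ : V := (1 - s)⁻¹ • ∑ x : t, (a x * (c₀ - (σ x : ℂ))) • u (σ x) with hv₁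
    have hv₁w : (v₁ : W) = w := by
      rw [hv₁]
      rw [SetLike.val_smul, Submodule.coe_sum]
      simp only [SetLike.val_smul, hσ]
      rw [← hkey, smul_smul, inv_mul_cancel₀ h1s, one_smul]
    have hweq : (⟨w, hwV⟩ : V) = v₁ := Subtype.ext hv₁w.symm
    rw [hweq, hv₁, map_smul, map_sum]
    apply Submodule.smul_mem
    apply Submodule.sum_mem
    intro x _
    rw [map_smul]
    apply Submodule.smul_mem
    rw [hNu]
    exact Submodule.sub_mem _ hwV (Submodule.smul_mem _ _ (u (σ x)).2)

end JordanAux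

open JordanAux in
/-- `V_J := ⋂_{λ ∉ E} range(N^λ)` lies in `V` and is invariant under `N`. -/
theorem jordanSubspace_le_and_invariant (V : Submodule ℂ W) (N : V →ₗ[ℂ] W) :
    jordanSubspace V N ≤ V ∧
    ∀ w : W, ∀ hw : w ∈ jordanSubspace V N,
      ∃ hwV : w ∈ V, N ⟨w, hwV⟩ ∈ jordanSubspace V N := by
  classical
  have hle : jordanSubspace V N ≤ V := by
    have h := le_trans
      (iInf_le (fun l => ⨅ (_ : l ∈ (excSet V N)ᶜ), LinearMap.range (pencilOp V N l))
        ((1 : ℂ), (0 : ℂ)))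
      (iInf_le _ (one_zero_notMem V N))
    rwa [pencil_one_zero, Submodule.range_subtype] at h
  refine ⟨hle, fun w hw => ⟨hle hw, ?_⟩⟩
  rw [jordanSubspace, Submodule.mem_iInf]
  intro l
  rw [Submodule.mem_iInf]
  intro hl
  by_cases h2 : l.2 = 0
  · by_cases h1 : l.1 = 0
    · -- l = (0,0): then V = ⊥
      have hl0 : pencilOp V N l = 0 := by
        ext v
        rw [pencil_apply, h1, h2, zero_smul, zero_smul, add_zero]
        rfl
      have hV : finrank ℂ V = 0 := by
        rw [Set.mem_compl_iff, excSet, Set.mem_setOf_eq] at hl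
        push_neg at hl
        have hle1 := hl ((1 : ℂ), (0 : ℂ))
        rw [pencil_one_zero, Submodule.range_subtype, hl0] at hle1
        rw [LinearMap.range_zero, finrank_bot] at hle1
        exact Nat.le_zero.mp hle1
      have hVbot : V = ⊥ := Submodule.finrank_eq_zero.mp hV
      have hw0 : w = 0 := by
        have := hle hw
        rw [hVbot, Submodule.mem_bot] at this
        exact this
      have : (⟨w, hle hw⟩ : V) = 0 := Subtype.ext hw0
      rw [this, map_zero]
      exact Submodule.zero_mem _
    · -- l = (l₁, 0), l₁ ≠ 0 : range = V
      have hrange : LinearMap.range (pencilOp V N l) = V := by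
        apply le_antisymm
        · rintro x ⟨v, rfl⟩
          rw [pencil_apply, h2, zero_smul, add_zero]
          exact V.smul_mem _ v.2
        · intro x hx
          exact ⟨(l.1)⁻¹ • ⟨x, hx⟩, by
            rw [pencil_apply, h2, zero_smul, add_zero, SetLike.val_smul,
              smul_smul, mul_inv_cancel₀ h1, one_smul]⟩
      rw [hrange]
      exact key V N w hw (hle hw)
  · -- l.2 ≠ 0
    obtain ⟨v, hv⟩ := mem_range_of_mem_jordan V N hw hl
    refine ⟨l.2⁻¹ • ⟨w, hle hw⟩ - (l.2⁻¹ * l.1) • v, ?_⟩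
    rw [map_sub, map_smul, map_smul, hv, pencil_apply]
    show l.2⁻¹ • (l.1 • w + l.2 • (N ⟨w, hle hw⟩ : W)) - (l.2⁻¹ * l.1) • w
      = (N ⟨w, hle hw⟩ : W)
    rw [smul_add, smul_smul, smul_smul, inv_mul_cancel₀ h2, one_smul]
    abel
end

section
/- Let W be a finite-dimensional vector space over ℂ, V ⊆ W a subspace, N : V → W a linear map, and I : V → W the natural inclusion; for λ = (λ₁, λ₂) ∈ ℂ² set N^λ := λ₁I + λ₂N, let E be the exceptional set of the pencil and V_J := ⋂_{λ ∈ ℂ² \ E} range(N^λ) (so that V_J ⊆ V and N(V_J) ⊆ V_J). Then ⋂_{λ ∈ ℂ² \ {(0,0)}} range(N^λ) = {0} if and only if the Jordan part N_J := N|_{V_J} : V_J → V_J is diagonalizable, i.e. V_J is spanned by eigenvectors of N_J. -/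
open Module

variable {W : Type*} [AddCommGroup W] [Module ℂ W] [FiniteDimensional ℂ W]

section Aux

variable (V : Submodule ℂ W) (N : V →ₗ[ℂ] W)

noncomputable def pA (c : ℂ) : V →ₗ[ℂ] W := pencilOp V N (c, 1)

lemma pencil_apply (l : ℂ × ℂ) (v : V) :
    pencilOp V N l v = l.1 • (v : W) + l.2 • N v := by
  simp [pencilOp]

lemma pA_apply (c : ℂ) (v : V) : pA V N c v = c • (v : W) + N v := by
  simp [pA, pencil_apply]

lemma pA_shift (a b : ℂ) (v : V) :
    pA V N a v = pA V N b v + (a - b) • (v : W) := by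
  simp only [pA_apply, sub_smul]
  abel

lemma pencil_one_zero : pencilOp V N (1, 0) = V.subtype := by
  ext v
  simp [pencil_apply]

lemma pencil_smul (l : ℂ × ℂ) (h : l.2 ≠ 0) (v : V) :
    pencilOp V N l v = l.2 • pA V N (l.1 / l.2) v := by
  simp only [pencil_apply, pA_apply, smul_add, smul_smul]
  rw [mul_div_cancel₀ _ h]

/-- The set of "eigenvalue parameters" where the pencil member fails to be injective. -/
def badSet : Set ℂ := {c | LinearMap.ker (pA V N c) ≠ ⊥}

lemma ker_pA_eq_bot {c : ℂ} (hc : c ∉ badSet V N) :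
    LinearMap.ker (pA V N c) = ⊥ := not_not.mp hc

lemma mem_excSet_iff (l : ℂ × ℂ) :
    l ∈ excSet V N ↔ LinearMap.ker (pencilOp V N l) ≠ ⊥ := by
  constructor
  · rintro ⟨μ, hμ⟩ hker
    have h1 := LinearMap.finrank_range_add_finrank_ker (pencilOp V N l)
    have h2 : finrank ℂ (LinearMap.range (pencilOp V N μ)) ≤ finrank ℂ V :=
      LinearMap.finrank_range_le _
    rw [hker, finrank_bot, add_zero] at h1
    omega
  · intro hker
    refine ⟨(1, 0), ?_⟩
    have h1 := LinearMap.finrank_range_add_finrank_ker (pencilOp V N l)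
    have hk : finrank ℂ (LinearMap.ker (pencilOp V N l)) ≠ 0 := by
      intro h0
      exact hker (Submodule.finrank_eq_zero.mp h0)
    have h2 : finrank ℂ (LinearMap.range (pencilOp V N (1, 0))) = finrank ℂ V := by
      rw [pencil_one_zero, Submodule.range_subtype]
    omega

lemma mem_jordan_iff (w : W) :
    w ∈ jordanSubspace V N ↔
      w ∈ V ∧ ∀ c ∉ badSet V N, w ∈ LinearMap.range (pA V N c) := by
  simp only [jordanSubspace, Submodule.mem_iInf]
  constructor
  · intro h
    constructor
    · have h10 : (1, 0) ∉ excSet V N := by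
        rw [mem_excSet_iff, not_not, pencil_one_zero, Submodule.ker_subtype]
      have := h (1, 0) h10
      rwa [pencil_one_zero, Submodule.range_subtype] at this
    · intro c hc
      have hc1 : (c, 1) ∉ excSet V N := by
        rw [mem_excSet_iff, not_not]
        exact ker_pA_eq_bot V N hc
      exact h (c, 1) hc1
  · rintro ⟨hV, hR⟩ l hl
    rw [Set.mem_compl_iff, mem_excSet_iff, not_not] at hl
    by_cases h2 : l.2 = 0
    · by_cases h1 : l.1 = 0
      · have hv0 : (⟨w, hV⟩ : V) = 0 := by
          have hm : (⟨w, hV⟩ : V) ∈ LinearMap.ker (pencilOp V N l) := by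
            rw [LinearMap.mem_ker, pencil_apply, h1, h2]
            simp
          rwa [hl, Submodule.mem_bot] at hm
        have hw0 : w = 0 := congrArg Subtype.val hv0
        rw [hw0]
        exact zero_mem _
      · refine ⟨l.1⁻¹ • ⟨w, hV⟩, ?_⟩
        rw [pencil_apply, h2]
        simp [smul_smul, mul_inv_cancel₀ h1]
    · have hgood : l.1 / l.2 ∉ badSet V N := by
        rw [badSet, Set.mem_setOf_eq, not_not, eq_bot_iff]
        intro v hv
        rw [LinearMap.mem_ker] at hv
        have : v ∈ LinearMap.ker (pencilOp V N l) := by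
          rw [LinearMap.mem_ker, pencil_smul V N l h2, hv, smul_zero]
        rwa [hl] at this
      obtain ⟨u, hu⟩ := hR _ hgood
      refine ⟨l.2⁻¹ • u, ?_⟩
      rw [pencil_smul V N l h2, map_smul, smul_smul, mul_inv_cancel₀ h2, one_smul, hu]

lemma mem_kinf_iff (w : W) :
    (w ∈ ⨅ l ∈ {l : ℂ × ℂ | l ≠ 0}, LinearMap.range (pencilOp V N l)) ↔
      w ∈ V ∧ ∀ c : ℂ, w ∈ LinearMap.range (pA V N c) := by
  simp only [Submodule.mem_iInf, Set.mem_setOf_eq]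
  constructor
  · intro h
    constructor
    · have := h (1, 0) (by simp)
      rwa [pencil_one_zero, Submodule.range_subtype] at this
    · intro c
      exact h (c, 1) (by simp)
  · rintro ⟨hV, hR⟩ l hl
    by_cases h2 : l.2 = 0
    · have h1 : l.1 ≠ 0 := by
        intro h1
        exact hl (Prod.ext h1 h2)
      refine ⟨l.1⁻¹ • ⟨w, hV⟩, ?_⟩
      rw [pencil_apply, h2]
      simp [smul_smul, mul_inv_cancel₀ h1]
    · obtain ⟨u, hu⟩ := hR (l.1 / l.2)
      refine ⟨l.2⁻¹ • u, ?_⟩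
      rw [pencil_smul V N l h2, map_smul, smul_smul, mul_inv_cancel₀ h2, one_smul, hu]

lemma badSet_finite : (badSet V N).Finite := by
  obtain ⟨V', hV'⟩ := Submodule.exists_isCompl V
  set g : Module.End ℂ V := (V.projectionOnto V' hV') ∘ₗ N with hg
  apply Set.Finite.subset ((Module.End.finite_hasEigenvalue g).image (fun μ => -μ))
  intro c hc
  obtain ⟨v, hvker, hv0⟩ := Submodule.exists_mem_ne_zero_of_ne_bot hc
  have hNv : N v = ((-c • v : V) : W) := by
    have h0 : c • (v : W) + N v = 0 := by
      have h := LinearMap.mem_ker.mp hvker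
      rwa [pA_apply] at h
    have h1 : N v = -(c • (v : W)) := eq_neg_of_add_eq_zero_right h0
    rw [h1]
    simp [neg_smul]
  have hev : g v = -c • v := by
    rw [hg, LinearMap.comp_apply, hNv, Submodule.projectionOnto_apply_left]
  refine ⟨-c, ?_, by simp⟩
  exact Module.End.hasEigenvalue_of_hasEigenvector
    ⟨Module.End.mem_eigenspace_iff.mpr hev, hv0⟩

lemma goodSet_infinite : ((badSet V N)ᶜ : Set ℂ).Infinite :=
  (badSet_finite V N).infinite_compl

lemma exists_preimage_of_invariant {U : Submodule ℂ W} (hUV : U ≤ V)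
    (hinv : ∀ v : V, (v : W) ∈ U → N v ∈ U) {c : ℂ} (hc : c ∉ badSet V N)
    {w : W} (hw : w ∈ U) : ∃ u : V, (u : W) ∈ U ∧ pA V N c u = w := by
  have hmem : ∀ x : U, pA V N c (Submodule.inclusion hUV x) ∈ U := by
    intro x
    rw [pA_apply]
    have h1 : ((Submodule.inclusion hUV x : V) : W) = (x : W) := rfl
    rw [h1]
    exact add_mem (U.smul_mem c x.2) (hinv _ (by rw [h1]; exact x.2))
  set e : U →ₗ[ℂ] U :=
    LinearMap.codRestrict U ((pA V N c) ∘ₗ Submodule.inclusion hUV) hmem with he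
  have hinj : Function.Injective e := by
    intro a b hab
    have h1 : pA V N c (Submodule.inclusion hUV a) = pA V N c (Submodule.inclusion hUV b) :=
      congrArg Subtype.val hab
    have h2 : Function.Injective (pA V N c) :=
      LinearMap.ker_eq_bot.mp (ker_pA_eq_bot V N hc)
    exact Submodule.inclusion_injective hUV (h2 h1)
  obtain ⟨x, hx⟩ := (LinearMap.injective_iff_surjective).mp hinj ⟨w, hw⟩
  refine ⟨Submodule.inclusion hUV x, ?_, ?_⟩
  · exact x.2
  · exact congrArg Subtype.val hx

end Aux

section Aux2

variable (V : Submodule ℂ W) (N : V →ₗ[ℂ] W)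

lemma jordan_le : jordanSubspace V N ≤ V :=
  fun w hw => ((mem_jordan_iff V N w).mp hw).1

lemma jordan_invariant :
    ∀ v : V, (v : W) ∈ jordanSubspace V N → N v ∈ jordanSubspace V N := by
  intro v hv
  obtain ⟨hwV, hR⟩ := (mem_jordan_iff V N _).mp hv
  classical
  set w : W := (v : W) with hwdef
  set sol : ℂ → V := fun c => if h : ∃ u : V, pA V N c u = w then h.choose else 0 with hsol
  have hsolspec : ∀ c ∉ badSet V N, pA V N c (sol c) = w := by
    intro c hc
    have h : ∃ u : V, pA V N c u = w := hR c hc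
    simp only [hsol, dif_pos h]
    exact h.choose_spec
  set G : Set ℂ := (badSet V N)ᶜ with hG
  have hGinf : G.Infinite := goodSet_infinite V N
  set X : Submodule ℂ V := Submodule.span ℂ (sol '' G) with hX
  have hsolX : ∀ c ∈ G, sol c ∈ X := fun c hc =>
    Submodule.subset_span (Set.mem_image_of_mem sol hc)
  -- find a finite subset S of G with X = span (sol '' S)
  obtain ⟨T, hT⟩ : X.FG := IsNoetherian.noetherian X
  have hfinsub : ∀ t : V, t ∈ X → ∃ ft : Finset V,
      ↑ft ⊆ sol '' G ∧ t ∈ Submodule.span ℂ (ft : Set V) := by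
    intro t ht
    rw [hX] at ht
    exact Submodule.mem_span_finite_of_mem_span ht
  choose ft hft1 hft2 using hfinsub
  set U₀ : Finset V := T.attach.biUnion
    (fun t => ft t.1 (by rw [← hT]; exact Submodule.subset_span t.2)) with hU₀
  have hU₀sub : (U₀ : Set V) ⊆ sol '' G := by
    intro y hy
    rw [hU₀] at hy
    simp only [Finset.coe_biUnion, Set.mem_iUnion, Finset.mem_coe] at hy
    obtain ⟨t, _, hy⟩ := hy
    exact hft1 _ _ hy
  have hXle : X ≤ Submodule.span ℂ (U₀ : Set V) := by
    rw [← hT, Submodule.span_le]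
    intro t ht
    have h2 := hft2 t (by rw [← hT]; exact Submodule.subset_span ht)
    refine Submodule.span_mono ?_ h2
    intro y hy
    rw [hU₀]
    simp only [Finset.coe_biUnion, Set.mem_iUnion, Finset.mem_coe]
    exact ⟨⟨t, ht⟩, Finset.mem_attach _ _, hy⟩
  have hU₀' : ∀ y : V, y ∈ U₀ → ∃ c, c ∈ G ∧ sol c = y := by
    intro y hy
    obtain ⟨c, hc, hcy⟩ := hU₀sub hy
    exact ⟨c, hc, hcy⟩
  choose! ch hch1 hch2 using hU₀'
  set S : Set ℂ := ch '' ↑U₀ with hS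
  have hSG : S ⊆ G := by
    rintro _ ⟨y, hy, rfl⟩
    exact hch1 y hy
  have hSfin : S.Finite := (U₀.finite_toSet).image ch
  have hXS : X = Submodule.span ℂ (sol '' S) := by
    apply le_antisymm
    · refine hXle.trans ?_
      rw [Submodule.span_le]
      intro y hy
      apply Submodule.subset_span
      exact ⟨ch y, ⟨y, hy, rfl⟩, hch2 y hy⟩
    · rw [hX]
      exact Submodule.span_mono (Set.image_mono (f := sol) hSG)
  -- pick a good c₀ outside S
  obtain ⟨c₀, hc₀⟩ := (hGinf.diff hSfin).nonempty
  have hc₀G : c₀ ∈ G := hc₀.1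
  have hc₀S : c₀ ∉ S := hc₀.2
  -- the key subspace Y
  set Y : Submodule ℂ W := X.map V.subtype with hY
  set g : X →ₗ[ℂ] W := (pA V N c₀) ∘ₗ X.subtype with hg
  have hgen : Submodule.span ℂ (sol '' S) ≤ (LinearMap.range g).comap V.subtype := by
    rw [Submodule.span_le]
    rintro _ ⟨c', hc'S, rfl⟩
    simp only [SetLike.mem_coe, Submodule.mem_comap]
    have hc'G : c' ∈ G := hSG hc'S
    have hne : c' - c₀ ≠ 0 := sub_ne_zero_of_ne (fun h => hc₀S (h ▸ hc'S))
    have hX0 : sol c₀ ∈ X := hsolX c₀ hc₀G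
    have hX' : sol c' ∈ X := hsolX c' hc'G
    refine ⟨(c' - c₀)⁻¹ • (⟨sol c₀, hX0⟩ - ⟨sol c', hX'⟩ : X), ?_⟩
    have hcomp : g ((c' - c₀)⁻¹ • (⟨sol c₀, hX0⟩ - ⟨sol c', hX'⟩ : X))
        = (c' - c₀)⁻¹ • (pA V N c₀ (sol c₀) - pA V N c₀ (sol c')) := by
      simp only [hg, LinearMap.comp_apply, map_smul, map_sub, Submodule.coe_subtype]
    have h1 : pA V N c₀ (sol c₀) = w := hsolspec c₀ hc₀G
    have h2 : pA V N c₀ (sol c')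
        = w + (c₀ - c') • ((sol c' : V) : W) := by
      rw [pA_shift V N c₀ c', hsolspec c' hc'G]
    rw [hcomp, h1, h2, sub_add_cancel_left, ← neg_smul, neg_sub, smul_smul,
      inv_mul_cancel₀ hne, one_smul]
    rfl
  have hYle : Y ≤ LinearMap.range g := by
    rintro _ ⟨x, hxX, rfl⟩
    exact hgen (le_of_eq hXS hxX)
  have hfr1 : finrank ℂ X = finrank ℂ Y :=
    (Submodule.equivMapOfInjective V.subtype (Submodule.injective_subtype V) X).finrank_eq
  have hfr2 : finrank ℂ (LinearMap.range g) ≤ finrank ℂ X := LinearMap.finrank_range_le g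
  have hYeq : Y = LinearMap.range g :=
    Submodule.eq_of_le_of_finrank_le hYle (hfr2.trans_eq hfr1)
  have hYV : Y ≤ V := Submodule.map_subtype_le V X
  have hYinv : ∀ u : V, (u : W) ∈ Y → N u ∈ Y := by
    intro u hu
    obtain ⟨x, hxX, hxu⟩ := hu
    have hxeq : x = u := Subtype.ext hxu
    rw [hxeq] at hxX
    have hAu : pA V N c₀ u ∈ Y := by
      rw [hYeq]
      refine ⟨⟨u, hxX⟩, ?_⟩
      rfl
    have hNu : N u = pA V N c₀ u - c₀ • (u : W) := by
      rw [pA_apply]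
      abel
    rw [hNu]
    refine sub_mem hAu (Y.smul_mem _ ?_)
    exact ⟨u, hxX, rfl⟩
  have hwY : w ∈ Y := by
    rw [hYeq]
    exact ⟨⟨sol c₀, hsolX c₀ hc₀G⟩, hsolspec c₀ hc₀G⟩
  have hYJ : Y ≤ jordanSubspace V N := by
    intro y hy
    rw [mem_jordan_iff]
    refine ⟨hYV hy, fun c hc => ?_⟩
    obtain ⟨u, _, hu2⟩ := exists_preimage_of_invariant V N hYV hYinv hc hy
    exact ⟨u, hu2⟩
  exact hYJ (hYinv v hwY)

lemma exists_jordan_preimage (c : ℂ) {j : W} (hj : j ∈ jordanSubspace V N)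
    (hrange : j ∈ LinearMap.range (pA V N c)) :
    ∃ u : V, (u : W) ∈ jordanSubspace V N ∧ pA V N c u = j := by
  by_cases hc : c ∈ badSet V N
  · obtain ⟨v, hv⟩ := hrange
    refine ⟨v, ?_, hv⟩
    rw [mem_jordan_iff]
    refine ⟨v.2, fun c' hc' => ?_⟩
    have hne : c - c' ≠ 0 := sub_ne_zero_of_ne (fun h => hc' (h ▸ hc))
    obtain ⟨u', hu'⟩ := ((mem_jordan_iff V N j).mp hj).2 c' hc'
    refine ⟨(c - c')⁻¹ • (u' - v), ?_⟩
    rw [map_smul, map_sub, hu']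
    have h2 : pA V N c' v = j + (c' - c) • (v : W) := by
      rw [pA_shift V N c' c, hv]
    rw [h2, sub_add_cancel_left, ← neg_smul, neg_sub, smul_smul,
      inv_mul_cancel₀ hne, one_smul]
  · exact exists_preimage_of_invariant V N (jordan_le V N) (jordan_invariant V N) hc hj

end Aux2

section Core

open Polynomial

lemma core_inf_range_eq_bot_iff {U : Type*} [AddCommGroup U] [Module ℂ U]
    [FiniteDimensional ℂ U] (f : Module.End ℂ U) :
    (⨅ c : ℂ, LinearMap.range (f - c • (1 : Module.End ℂ U))) = ⊥ ↔
    (⨆ c : ℂ, LinearMap.ker (f - c • (1 : Module.End ℂ U))) = ⊤ := by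
  constructor
  · intro hbot
    by_contra hne
    have htop := Module.End.iSup_maxGenEigenspace_eq_top f
    have hex : ∃ μ, LinearMap.ker (f - μ • (1 : Module.End ℂ U)) ≠ f.maxGenEigenspace μ := by
      by_contra hall
      push_neg at hall
      exact hne (by rw [iSup_congr hall, htop])
    obtain ⟨μ, hμ⟩ := hex
    have hle : LinearMap.ker (f - μ • (1 : Module.End ℂ U)) ≤ f.maxGenEigenspace μ := by
      intro x hx
      rw [Module.End.mem_maxGenEigenspace]
      exact ⟨1, by simpa [pow_one] using hx⟩
    obtain ⟨v, hvG, hvK⟩ : ∃ v, v ∈ f.maxGenEigenspace μ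
        ∧ v ∉ LinearMap.ker (f - μ • (1 : Module.End ℂ U)) := by
      by_contra h
      push_neg at h
      exact hμ (le_antisymm hle h)
    obtain ⟨k, hk⟩ := (Module.End.mem_maxGenEigenspace f μ v).mp hvG
    have hkex : ∃ m, ((f - μ • (1 : Module.End ℂ U)) ^ m) v = 0 := ⟨k, hk⟩
    classical
    set m := Nat.find hkex with hm
    have hm0 : ((f - μ • (1 : Module.End ℂ U)) ^ m) v = 0 := Nat.find_spec hkex
    have hm2 : 2 ≤ m := by
      by_contra h
      push_neg at h
      interval_cases m
      · rw [pow_zero, Module.End.one_apply] at hm0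
        exact hvK (by rw [LinearMap.mem_ker, hm0]; simp)
      · rw [pow_one] at hm0
        exact hvK (LinearMap.mem_ker.mpr hm0)
    set x := ((f - μ • (1 : Module.End ℂ U)) ^ (m - 1)) v with hxdef
    have hx0 : x ≠ 0 := Nat.find_min hkex (by omega)
    have hxk : (f - μ • (1 : Module.End ℂ U)) x = 0 := by
      rw [hxdef, ← Module.End.mul_apply, ← pow_succ']
      have : m - 1 + 1 = m := by omega
      rw [this]
      exact hm0
    have hfx : f x = μ • x := by
      have := hxk
      rw [LinearMap.sub_apply, LinearMap.smul_apply, Module.End.one_apply, sub_eq_zero] at this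
      exact this
    have hxmem : x ∈ ⨅ c : ℂ, LinearMap.range (f - c • (1 : Module.End ℂ U)) := by
      rw [Submodule.mem_iInf]
      intro c
      by_cases hc : c = μ
      · subst hc
        refine ⟨((f - c • (1 : Module.End ℂ U)) ^ (m - 2)) v, ?_⟩
        rw [← Module.End.mul_apply, ← pow_succ']
        have : m - 2 + 1 = m - 1 := by omega
        rw [this, hxdef]
      · refine ⟨(μ - c)⁻¹ • x, ?_⟩
        have hne' : μ - c ≠ 0 := sub_ne_zero_of_ne (Ne.symm hc)
        rw [map_smul, LinearMap.sub_apply, LinearMap.smul_apply, Module.End.one_apply, hfx,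
          ← sub_smul, smul_smul, inv_mul_cancel₀ hne', one_smul]
    rw [hbot, Submodule.mem_bot] at hxmem
    exact hx0 hxmem
  · intro htop
    rw [eq_bot_iff]
    intro x hx
    rw [Submodule.mem_iInf] at hx
    classical
    have hkerfin : Set.Finite {c : ℂ | LinearMap.ker (f - c • (1 : Module.End ℂ U)) ≠ ⊥} := by
      apply Set.Finite.subset (Module.End.finite_hasEigenvalue f)
      intro c hc
      obtain ⟨y, hy, hy0⟩ := Submodule.exists_mem_ne_zero_of_ne_bot hc
      have hyy : f y = c • y := by
        have := LinearMap.mem_ker.mp hy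
        rwa [LinearMap.sub_apply, LinearMap.smul_apply, Module.End.one_apply, sub_eq_zero] at this
      exact Module.End.hasEigenvalue_of_hasEigenvector
        ⟨Module.End.mem_eigenspace_iff.mpr hyy, hy0⟩
    set F : Finset ℂ := hkerfin.toFinset with hF
    by_cases hFne : F.Nonempty
    · set q : ℂ[X] := ∏ μ ∈ F, (X - C μ) with hq
      have haevalX : ∀ c : ℂ, Polynomial.aeval f (X - C c) = f - c • (1 : Module.End ℂ U) := by
        intro c
        rw [map_sub, Polynomial.aeval_X, Polynomial.aeval_C,
          Module.algebraMap_end_eq_smul_id]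
        rfl
      have hq0 : Polynomial.aeval f q = 0 := by
        have hle : (⨆ c : ℂ, LinearMap.ker (f - c • (1 : Module.End ℂ U)))
            ≤ LinearMap.ker (Polynomial.aeval f q) := by
          refine iSup_le fun c => ?_
          intro y hy
          by_cases hcF : c ∈ F
          · rw [LinearMap.mem_ker]
            have hfac : q = (∏ μ ∈ F.erase c, (X - C μ)) * (X - C c) :=
              (Finset.prod_erase_mul F _ hcF).symm
            rw [hfac, map_mul, Module.End.mul_apply, haevalX c]
            rw [LinearMap.mem_ker.mp hy, map_zero]
          · have hker : LinearMap.ker (f - c • (1 : Module.End ℂ U)) = ⊥ := by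
              have : c ∉ {c : ℂ | LinearMap.ker (f - c • (1 : Module.End ℂ U)) ≠ ⊥} := by
                intro hmem
                exact hcF (hkerfin.mem_toFinset.mpr hmem)
              exact not_not.mp this
            rw [hker] at hy
            rw [(Submodule.mem_bot ℂ).mp hy]
            simp
        have : LinearMap.ker (Polynomial.aeval f q) = ⊤ := top_le_iff.mp (htop ▸ hle)
        exact LinearMap.ker_eq_top.mp this
      have hsum := Lagrange.sum_basis (Function.injective_id.injOn) hFne
      have hxsum : x = ∑ j ∈ F, (Polynomial.aeval f (Lagrange.basis F id j)) x := by
        have h1 : Polynomial.aeval f (∑ j ∈ F, Lagrange.basis F id j)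
            = (1 : Module.End ℂ U) := by rw [hsum, map_one]
        have h2 := congrArg (fun (e : Module.End ℂ U) => e x) h1
        simpa [map_sum, LinearMap.sum_apply] using h2.symm
      have hterm : ∀ j ∈ F, (Polynomial.aeval f (Lagrange.basis F id j)) x = 0 := by
        intro j hj
        obtain ⟨y, hy⟩ := hx j
        have hb : Lagrange.basis F id j * (X - C j)
            = C (∏ k ∈ F.erase j, (j - k)⁻¹) * q := by
          rw [Lagrange.basis]
          simp only [Lagrange.basisDivisor, id_eq]
          rw [Finset.prod_mul_distrib, mul_assoc, Finset.prod_erase_mul F _ hj, ← hq, map_prod]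
        have : (Polynomial.aeval f (Lagrange.basis F id j)) x
            = (Polynomial.aeval f (Lagrange.basis F id j * (X - C j))) y := by
          rw [map_mul, Module.End.mul_apply, haevalX j, hy]
        rw [this, hb, map_mul, Module.End.mul_apply, hq0]
        simp
      rw [hxsum, Submodule.mem_bot]
      exact Finset.sum_eq_zero hterm
    · have hallbot : ∀ c : ℂ, LinearMap.ker (f - c • (1 : Module.End ℂ U)) = ⊥ := by
        intro c
        by_contra hc
        exact hFne ⟨c, hkerfin.mem_toFinset.mpr hc⟩
      have : (⊤ : Submodule ℂ U) ≤ ⊥ := by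
        rw [← htop]
        exact iSup_le fun c => (hallbot c).le
      exact this (Submodule.mem_top)

end Core

section Glue

variable (V : Submodule ℂ W) (N : V →ₗ[ℂ] W)

/-- The Jordan part `N_J : V_J → V_J`. -/
noncomputable def nJ : jordanSubspace V N →ₗ[ℂ] jordanSubspace V N :=
  LinearMap.codRestrict _ (N ∘ₗ Submodule.inclusion (jordan_le V N))
    (fun x => jordan_invariant V N _ x.2)

lemma nJ_coe (x : jordanSubspace V N) :
    (nJ V N x : W) = N (Submodule.inclusion (jordan_le V N) x) := rfl

lemma nJ_coe' (x : jordanSubspace V N) :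
    (nJ V N x : W) = N ⟨(x : W), jordan_le V N x.2⟩ := rfl

end Glue

/-- `⋂_{λ ≠ 0} range(N^λ) = {0}` if and only if the Jordan part `N_J = N|_{V_J}` is
diagonalizable, i.e. `V_J` is spanned by eigenvectors of `N_J`. -/
theorem inf_ranges_eq_bot_iff_jordanPart_diagonalizable
    (V : Submodule ℂ W) (N : V →ₗ[ℂ] W) :
    (⨅ l ∈ {l : ℂ × ℂ | l ≠ 0}, LinearMap.range (pencilOp V N l)) = ⊥ ↔
    jordanSubspace V N =
      Submodule.span ℂ {w : W | ∃ (hw : w ∈ V) (c : ℂ),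
        w ∈ jordanSubspace V N ∧ N ⟨w, hw⟩ = c • w} := by

  have hJle := jordan_le V N
  -- step 1
  have h1 : (⨅ l ∈ {l : ℂ × ℂ | l ≠ 0}, LinearMap.range (pencilOp V N l)) = ⊥ ↔
      (⨅ c : ℂ, LinearMap.range (nJ V N - c • (1 : Module.End ℂ (jordanSubspace V N)))) = ⊥ := by
    constructor
    · intro h
      rw [eq_bot_iff]
      intro x hx
      rw [Submodule.mem_iInf] at hx
      have hxK : (x : W) ∈ ⨅ l ∈ {l : ℂ × ℂ | l ≠ 0}, LinearMap.range (pencilOp V N l) := by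
        rw [mem_kinf_iff]
        refine ⟨hJle x.2, fun c => ?_⟩
        obtain ⟨u, hu⟩ := hx (-c)
        refine ⟨Submodule.inclusion hJle u, ?_⟩
        have hcoe := congrArg Subtype.val hu
        rw [pA_apply]
        have hl : ((nJ V N - (-c) • (1 : Module.End ℂ (jordanSubspace V N))) u : W)
            = N (Submodule.inclusion hJle u) + c • ((u : W)) := by
          rw [LinearMap.sub_apply, LinearMap.smul_apply, Module.End.one_apply,
            AddSubgroupClass.coe_sub, nJ_coe, SetLike.val_smul, neg_smul, sub_neg_eq_add]
        rw [hl] at hcoe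
        rw [← hcoe]
        have : ((Submodule.inclusion hJle u : V) : W) = (u : W) := rfl
        rw [this]
        abel
      rw [h, Submodule.mem_bot] at hxK
      rw [Submodule.mem_bot]
      exact Subtype.ext hxK
    · intro h
      rw [eq_bot_iff]
      intro w hw
      obtain ⟨hwV, hwA⟩ := (mem_kinf_iff V N w).mp hw
      have hwJ : w ∈ jordanSubspace V N := (mem_jordan_iff V N w).mpr ⟨hwV, fun c _ => hwA c⟩
      have hmem : (⟨w, hwJ⟩ : jordanSubspace V N) ∈
          ⨅ c : ℂ, LinearMap.range (nJ V N - c • (1 : Module.End ℂ (jordanSubspace V N))) := by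
        rw [Submodule.mem_iInf]
        intro c
        obtain ⟨u, huJ, huA⟩ := exists_jordan_preimage V N (-c) hwJ (hwA (-c))
        refine ⟨⟨(u : W), huJ⟩, ?_⟩
        apply Subtype.ext
        have hl : ((nJ V N - c • (1 : Module.End ℂ (jordanSubspace V N)))
            (⟨(u : W), huJ⟩ : jordanSubspace V N) : W) = N u - c • (u : W) := by
          simp only [LinearMap.sub_apply, LinearMap.smul_apply, Module.End.one_apply]
          rw [AddSubgroupClass.coe_sub, nJ_coe']
          rfl
        rw [pA_apply] at huA
        have habel : N u - c • (u : W) = (-c) • (u : W) + N u := by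
          rw [neg_smul]
          abel
        rw [hl, habel, huA]
      rw [h, Submodule.mem_bot] at hmem
      rw [Submodule.mem_bot]
      exact congrArg Subtype.val hmem
  -- step 2
  have hmap : Submodule.map (jordanSubspace V N).subtype
      (⨆ c : ℂ, LinearMap.ker (nJ V N - c • (1 : Module.End ℂ (jordanSubspace V N))))
      = Submodule.span ℂ {w : W | ∃ (hw : w ∈ V) (c : ℂ),
        w ∈ jordanSubspace V N ∧ N ⟨w, hw⟩ = c • w} := by
    rw [Submodule.map_iSup]
    apply le_antisymm
    · refine iSup_le fun c => ?_
      rintro _ ⟨x, hx, rfl⟩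
      apply Submodule.subset_span
      refine ⟨hJle x.2, c, x.2, ?_⟩
      have h0 := LinearMap.mem_ker.mp hx
      rw [LinearMap.sub_apply, LinearMap.smul_apply, Module.End.one_apply, sub_eq_zero] at h0
      have hcoe := congrArg Subtype.val h0
      rw [nJ_coe'] at hcoe
      simpa using hcoe
    · rw [Submodule.span_le]
      rintro w ⟨hwV, c, hwJ, hEig⟩
      have hker : (⟨w, hwJ⟩ : jordanSubspace V N) ∈
          LinearMap.ker (nJ V N - c • (1 : Module.End ℂ (jordanSubspace V N))) := by
        rw [LinearMap.mem_ker, LinearMap.sub_apply, LinearMap.smul_apply,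
          Module.End.one_apply, sub_eq_zero]
        apply Subtype.ext
        rw [nJ_coe']
        have : N (⟨w, hJle hwJ⟩ : V) = N (⟨w, hwV⟩ : V) := rfl
        rw [this, hEig]
        simp
      exact Submodule.mem_iSup_of_mem c ⟨⟨w, hwJ⟩, hker, rfl⟩
  have h2 : (jordanSubspace V N =
      Submodule.span ℂ {w : W | ∃ (hw : w ∈ V) (c : ℂ),
        w ∈ jordanSubspace V N ∧ N ⟨w, hw⟩ = c • w}) ↔
      (⨆ c : ℂ, LinearMap.ker (nJ V N - c • (1 : Module.End ℂ (jordanSubspace V N)))) = ⊤ := by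
    constructor
    · intro hJS
      apply Submodule.map_injective_of_injective
        (Submodule.injective_subtype (jordanSubspace V N))
      rw [hmap, Submodule.map_top, Submodule.range_subtype]
      exact hJS.symm
    · intro htop
      rw [← hmap, htop, Submodule.map_top, Submodule.range_subtype]
  exact h1.trans ((core_inf_range_eq_bot_iff (nJ V N)).trans h2.symm)
end
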